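/- arXiv:2306.04200 — 2 statements merged into one kernel-verified Lean document; each statement's English description precedes it below -/
import Mathlib

section
/- Let R ≅ R₁ × ⋯ × Rₙ (n ≥ 2), where each (Rᵢ, Mᵢ) is a local principal ideal ring with at least two nonzero proper ideals. Then the strong metric dimension of PIS(R) equals |V(PIS(R))| − n − 1, where |V(PIS(R))| is the number of nonzero proper ideals of R. -/
open SimpleGraph

/-- The prime ideal sum graph of a commutative ring. -/
def PIS (R : Type*) [CommRing R] :
    SimpleGraph {I : Ideal R // I ≠ ⊥ ∧ I ≠ ⊤} where
  Adj I J := I ≠ J ∧ (I.1 + J.1).IsPrime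
  symm := by
    constructor
    rintro I J ⟨hne, hp⟩
    exact ⟨hne.symm, by rwa [add_comm]⟩
  loopless := by constructor; rintro I ⟨hne, -⟩; exact hne rfl

/-- `w` strongly resolves `u` and `v`. -/
def StronglyResolves {V : Type*} (G : SimpleGraph V) (w u v : V) : Prop :=
  G.dist w v = G.dist w u + G.dist u v ∨ G.dist w u = G.dist w v + G.dist v u

/-- A strong resolving set. -/
def IsStrongResolvingSet {V : Type*} (G : SimpleGraph V) (S : Set V) : Prop :=
  ∀ u v : V, u ≠ v → ∃ w ∈ S, StronglyResolves G w u v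

/-- The strong metric dimension. -/
noncomputable def sdim {V : Type*} (G : SimpleGraph V) : ℕ∞ :=
  ⨅ S : {S : Set V // IsStrongResolvingSet G S}, S.1.encard

/-!
In an Artinian ring prime ideals are maximal, so `PIS R` only sees the lattice `Ideal R`: two
vertices are adjacent iff their join is a coatom. For `R = ∏ Rᵢ` this lattice is `∏ Ideal Rᵢ`, and
two proper tuples are adjacent iff the sets of coordinates where they are not `⊤` meet in a single
index `i`, at which their join is `𝔪ᵢ`.

Any two non-adjacent vertices have a common neighbour, so the diameter is `2`; hence the complement
of a strong resolving set is a clique, and conversely the complement of a clique `C` is strongly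
resolving as soon as any two members of `C` are told apart by adjacency to a vertex outside `C`.
Cliques have at most `n + 1` members: either all of them are proper at a common index `i`, and
since `𝔪ᵢ` is principal (so not the join of two smaller ideals) they inject into `Option (Fin n)`;
or their supports have at least two elements and meet pairwise in one point, and Fisher's
inequality bounds them by `n`. For `⊥ < a < 𝔪ᵢ₀`, the tuple `(a, ⊤, …, ⊤)` together with the tuples
equal to `𝔪` exactly at `i₀` and `j` (one for each `j`) is a clique of size `n + 1`, whose members
are separated by the vertices `(⊤, …, ⊤, ⊥, ⊤, …, ⊤)`.
-/

namespace SimpleGraph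

variable {V W : Type*} {G : SimpleGraph V} {H : SimpleGraph W}

lemma ediam_le_two_of_exists_adj_adj
    (h : ∀ u v, u ≠ v → ¬G.Adj u v → ∃ w, G.Adj u w ∧ G.Adj w v) : G.ediam ≤ 2 :=
  ediam_le_iff.2 fun u v ↦ not_lt.1 fun hlt ↦ by
    obtain ⟨huv, hadj, hcommon⟩ := two_lt_edist_iff.1 hlt
    obtain ⟨w, huw, hwv⟩ := h u v huv hadj
    exact hcommon.subset ⟨huw, hwv.symm⟩

lemma Hom.edist_map_le (f : G →g H) (u v : V) : H.edist (f u) (f v) ≤ G.edist u v := by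
  by_cases huv : G.Reachable u v
  · obtain ⟨p, hp⟩ := huv.exists_walk_length_eq_edist
    simpa [hp] using H.edist_le (p.map f)
  · simp [edist_eq_top_of_not_reachable huv]

lemma Iso.edist_eq (e : G ≃g H) (u v : V) : H.edist (e u) (e v) = G.edist u v :=
  le_antisymm (Hom.edist_map_le e.toHom u v) <| by
    simpa using Hom.edist_map_le e.symm.toHom (e u) (e v)

lemma Iso.dist_eq (e : G ≃g H) (u v : V) : H.dist (e u) (e v) = G.dist u v := by
  simp only [dist, e.edist_eq]

end SimpleGraph

section StrongResolving

variable {V W : Type*} {G : SimpleGraph V} {H : SimpleGraph W}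

lemma StronglyResolves.symm {w u v : V} (h : StronglyResolves G w u v) :
    StronglyResolves G w v u :=
  Or.symm h

lemma stronglyResolves_self_left (u v : V) : StronglyResolves G u u v := .inl (by simp)

lemma stronglyResolves_self_right (u v : V) : StronglyResolves G v u v := .inr (by simp)

lemma stronglyResolves_of_adj_of_not_adj {w u v : V} (hwu : G.Adj w u) (huv : G.Adj u v)
    (hwv : w ≠ v) (hnadj : ¬G.Adj w v) : StronglyResolves G w u v := by
  have h2 : G.edist w v = 2 := edist_eq_two_iff.2 ⟨hwv, hnadj, u, hwu, huv.symm⟩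
  left
  rw [dist_eq_one_iff_adj.2 hwu, dist_eq_one_iff_adj.2 huv]
  simp [SimpleGraph.dist, h2]

lemma SimpleGraph.Iso.stronglyResolves_iff (e : G ≃g H) {w u v : V} :
    StronglyResolves H (e w) (e u) (e v) ↔ StronglyResolves G w u v := by
  simp only [StronglyResolves, e.dist_eq]

lemma SimpleGraph.Iso.sdim_le (e : G ≃g H) : sdim H ≤ sdim G := by
  refine le_iInf fun ⟨S, hS⟩ ↦ iInf_le_of_le ⟨e '' S, fun u v huv ↦ ?_⟩
    (e.injective.encard_image S).le
  obtain ⟨w, hwS, hw⟩ := hS (e.symm u) (e.symm v) (by simpa using huv)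
  exact ⟨e w, Set.mem_image_of_mem e hwS, by simpa using e.stronglyResolves_iff.2 hw⟩

lemma SimpleGraph.Iso.sdim_eq (e : G ≃g H) : sdim G = sdim H :=
  le_antisymm e.symm.sdim_le e.sdim_le

lemma IsStrongResolvingSet.isClique_compl (hG : G.ediam ≤ 2) {S : Set V}
    (hS : IsStrongResolvingSet G S) : G.IsClique Sᶜ := by
  have hreach (x y : V) : G.Reachable x y :=
    reachable_of_edist_ne_top (ne_top_of_le_ne_top (by decide) (edist_le_ediam.trans hG))
  have hle (x y : V) : G.dist x y ≤ 2 := by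
    have := (hreach x y).coe_dist_eq_edist ▸ edist_le_ediam.trans hG
    exact_mod_cast this
  intro u hu v hv huv
  by_contra hadj
  have huv2 : G.dist u v = 2 := by
    have h0 := (hreach u v).pos_dist_of_ne huv
    have h1 : G.dist u v ≠ 1 := fun h ↦ hadj (dist_eq_one_iff_adj.1 h)
    have := hle u v
    omega
  obtain ⟨w, hwS, hw | hw⟩ := hS u v huv
  · have : G.dist w u = 0 := by have := hle w v; omega
    exact hu ((hreach w u).dist_eq_zero_iff.1 this ▸ hwS)
  · have : G.dist w v = 0 := by have := hle w u; rw [dist_comm] at huv2; omega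
    exact hv ((hreach w v).dist_eq_zero_iff.1 this ▸ hwS)

lemma isStrongResolvingSet_compl {C : Set V} (hC : G.IsClique C)
    (hsep : ∀ u ∈ C, ∀ v ∈ C, u ≠ v → ∃ w ∉ C, Xor (G.Adj w u) (G.Adj w v)) :
    IsStrongResolvingSet G Cᶜ := by
  intro u v huv
  by_cases hu : u ∈ C
  swap; · exact ⟨u, hu, stronglyResolves_self_left u v⟩
  by_cases hv : v ∈ C
  swap; · exact ⟨v, hv, stronglyResolves_self_right u v⟩
  obtain ⟨w, hw, ⟨hwu, hwv⟩ | ⟨hwv, hwu⟩⟩ := hsep u hu v hv huv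
  · exact ⟨w, hw, stronglyResolves_of_adj_of_not_adj hwu (hC hu hv huv)
      (ne_of_mem_of_not_mem hv hw).symm hwv⟩
  · exact ⟨w, hw, (stronglyResolves_of_adj_of_not_adj hwv (hC hv hu huv.symm)
      (ne_of_mem_of_not_mem hu hw).symm hwu).symm⟩

theorem sdim_eq_of_isClique [Finite V] (hG : G.ediam ≤ 2) {k : ℕ}
    (hbound : ∀ K, G.IsClique K → K.ncard ≤ k) {C : Set V} (hC : G.IsClique C)
    (hCk : C.ncard = k)
    (hsep : ∀ u ∈ C, ∀ v ∈ C, u ≠ v → ∃ w ∉ C, Xor (G.Adj w u) (G.Adj w v)) :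
    sdim G = (Nat.card V - k : ℕ) := by
  have hcard (S : Set V) : S.encard = (Nat.card V - Sᶜ.ncard : ℕ) := by
    rw [← S.toFinite.cast_ncard_eq, ← Set.ncard_add_ncard_compl S, Nat.add_sub_cancel]
  refine le_antisymm (iInf_le_of_le ⟨Cᶜ, isStrongResolvingSet_compl hC hsep⟩ ?_) ?_
  · rw [hcard, compl_compl, hCk]
  · refine le_iInf fun ⟨S, hS⟩ ↦ ?_
    rw [hcard]
    exact_mod_cast Nat.sub_le_sub_left (hbound _ (hS.isClique_compl hG)) _

end StrongResolving

open Finset in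
theorem Fintype.card_le_of_pairwise_card_inter_eq {ι α : Type*} [Fintype ι] [Fintype α]
    [DecidableEq α] (f : ι → Finset α) (l : ℕ) (hcard : ∀ u, l < #(f u))
    (hinter : Pairwise fun u v ↦ #(f u ∩ f v) = l) :
    Fintype.card ι ≤ Fintype.card α := by
  classical
  let g (u : ι) : α → ℝ := fun a ↦ if a ∈ f u then 1 else 0
  have hgram (u v : ι) : ∑ a, g u a * g v a = l + if u = v then (#(f u) - l : ℝ) else 0 := by
    have : ∑ a, g u a * g v a = #(f u ∩ f v) := by
      simp only [g, mul_ite, mul_one, mul_zero, ← ite_and, sum_boole]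
      congr 2; ext; simp [and_comm]
    rcases eq_or_ne u v with rfl | huv
    · simp [this]
    · simp [this, hinter huv, huv]
  suffices LinearIndependent ℝ g by
    simpa using this.fintype_card_le_finrank
  refine Fintype.linearIndependent_iff.2 fun c hc ↦ ?_
  have hzero (a : α) : ∑ u, c u * g u a = 0 := by simpa using congrFun hc a
  -- `‖∑ c u • g u‖² = l (∑ c u)² + ∑ (|f u| - l) (c u)²` is a sum of nonnegative terms.
  have hquad : l * (∑ u, c u) ^ 2 + ∑ u, (#(f u) - l : ℝ) * c u ^ 2 = 0 := calc
    _ = ∑ u, ∑ v, c u * c v * ∑ a, g u a * g v a := by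
      simp only [hgram, mul_add, sum_add_distrib, mul_ite, mul_zero, sum_ite_eq, sq, ← sum_mul,
        ← mul_sum]
      congr 1
      · ring
      · exact Finset.sum_congr rfl fun _ _ ↦ mul_comm _ _
    _ = ∑ a, (∑ u, c u * g u a) ^ 2 := by
      simp_rw [sq, sum_mul_sum, mul_sum]
      conv_lhs => enter [2, u]; rw [sum_comm]
      rw [sum_comm]
      refine Finset.sum_congr rfl fun _ _ ↦ Finset.sum_congr rfl fun _ _ ↦ ?_
      exact Finset.sum_congr rfl fun _ _ ↦ by ring
    _ = 0 := by simp [hzero]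
  have hpos (u : ι) : (0 : ℝ) < #(f u) - l := sub_pos.2 (mod_cast hcard u)
  have hterm (u : ι) : 0 ≤ (#(f u) - l : ℝ) * c u ^ 2 := by have := hpos u; positivity
  have hsum := ((add_eq_zero_iff_of_nonneg (by positivity) (Finset.sum_nonneg fun u _ ↦ hterm u)).1
    hquad).2
  intro u
  have hu := (Finset.sum_eq_zero_iff_of_nonneg fun v _ ↦ hterm v).1 hsum u (mem_univ u)
  exact pow_eq_zero_iff two_ne_zero |>.1 ((mul_eq_zero.1 hu).resolve_left (hpos u).ne')

lemma Pi.isCoatom_iff {ι : Type*} {π : ι → Type*} [∀ i, PartialOrder (π i)]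
    [∀ i, OrderTop (π i)] {f : ∀ i, π i} :
    IsCoatom f ↔ ∃ i, IsCoatom (f i) ∧ ∀ j, j ≠ i → f j = ⊤ := by
  simp only [← covBy_top_iff, Pi.covBy_iff, Pi.top_apply]

lemma Pi.isCoatom_update_top_iff {ι : Type*} [DecidableEq ι] {π : ι → Type*}
    [∀ i, PartialOrder (π i)] [∀ i, OrderTop (π i)] {k : ι} {b : π k} :
    IsCoatom (Function.update (⊤ : ∀ i, π i) k b) ↔ IsCoatom b := by
  refine ⟨fun h ↦ ?_, fun h ↦ Pi.isCoatom_iff.2 ⟨k, by simpa, fun j hj ↦ by simp [hj]⟩⟩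
  obtain ⟨i, hi, -⟩ := Pi.isCoatom_iff.1 h
  rcases eq_or_ne i k with rfl | hik
  · simpa using hi
  · simp only [ne_eq, hik, not_false_eq_true, Function.update_of_ne, Pi.top_apply] at hi
    exact (hi.1 rfl).elim

lemma Pi.update_top_bot_sup {ι : Type*} [DecidableEq ι] {π : ι → Type*} [∀ i, Lattice (π i)]
    [∀ i, BoundedOrder (π i)] (k : ι) (t : ∀ i, π i) :
    Function.update ⊤ k ⊥ ⊔ t = Function.update ⊤ k (t k) := by
  ext j
  rcases eq_or_ne j k with rfl | hjk <;> simp [*]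

def supCoatomGraph (α : Type*) [Lattice α] [BoundedOrder α] :
    SimpleGraph {a : α // a ≠ ⊥ ∧ a ≠ ⊤} where
  Adj a b := a ≠ b ∧ IsCoatom (a.1 ⊔ b.1)
  symm := ⟨fun _ _ h ↦ ⟨h.1.symm, sup_comm (α := α) .. ▸ h.2⟩⟩
  loopless := ⟨fun _ h ↦ h.1 rfl⟩

def OrderIso.supCoatomGraphIso {α β : Type*} [Lattice α] [BoundedOrder α] [Lattice β]
    [BoundedOrder β] (e : α ≃o β) : supCoatomGraph α ≃g supCoatomGraph β where
  toEquiv := e.toEquiv.subtypeEquiv fun a ↦ by simp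
  map_rel_iff' {a b} :=
    and_congr (Equiv.injective _).ne_iff (by rw [← e.isCoatom_iff, map_sup]; rfl)

namespace IsLocalRing

variable {R : Type*} [CommRing R] [IsLocalRing R]

lemma sup_eq_top_iff {I J : Ideal R} : I ⊔ J = ⊤ ↔ I = ⊤ ∨ J = ⊤ := by
  refine ⟨fun h ↦ ?_, by rintro (rfl | rfl) <;> simp⟩
  by_contra! hIJ
  exact (maximalIdeal.isMaximal R).ne_top
    (top_le_iff.1 (h ▸ sup_le (le_maximalIdeal hIJ.1) (le_maximalIdeal hIJ.2)))

lemma isCoatom_iff {I : Ideal R} : IsCoatom I ↔ I = maximalIdeal R :=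
  Ideal.isMaximal_def.symm.trans (isMaximal_iff R)

lemma eq_maximalIdeal_pow_of_le_of_not_le (hM : (maximalIdeal R).IsPrincipal) {I : Ideal R}
    {k : ℕ} (hle : I ≤ maximalIdeal R ^ k) (hnle : ¬I ≤ maximalIdeal R ^ (k + 1)) :
    I = maximalIdeal R ^ k := by
  obtain ⟨π, hπ⟩ := hM
  have hpow (j : ℕ) : maximalIdeal R ^ j = Ideal.span {π ^ j} := by
    rw [hπ]; exact Ideal.span_singleton_pow π j
  obtain ⟨x, hxI, hx⟩ := SetLike.not_le_iff_exists.1 hnle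
  obtain ⟨a, rfl⟩ := Ideal.mem_span_singleton'.1 (hpow k ▸ hle hxI)
  have ha : IsUnit a := by
    by_contra ha
    obtain ⟨b, rfl⟩ := Ideal.mem_span_singleton'.1 (hπ ▸ (mem_maximalIdeal a).2 ha)
    exact hx (hpow (k + 1) ▸ Ideal.mem_span_singleton'.2 ⟨b, by ring⟩)
  refine le_antisymm hle ?_
  rw [hpow, Ideal.span_singleton_le_iff_mem]
  have := I.mul_mem_left (↑ha.unit⁻¹) hxI
  rwa [← mul_assoc, IsUnit.val_inv_mul, one_mul] at this

lemma eq_bot_or_exists_eq_maximalIdeal_pow [IsNoetherianRing R]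
    (hM : (maximalIdeal R).IsPrincipal) (I : Ideal R) :
    I = ⊥ ∨ ∃ k, I = maximalIdeal R ^ k := by
  by_contra! h
  have hle (k : ℕ) : I ≤ maximalIdeal R ^ k := by
    induction k with
    | zero => simp
    | succ k ih => exact not_not.1 fun h' ↦ h.2 k (eq_maximalIdeal_pow_of_le_of_not_le hM ih h')
  exact h.1 <| eq_bot_iff.2 <| (le_iInf hle).trans_eq <|
    Ideal.iInf_pow_eq_bot_of_isLocalRing _ (maximalIdeal.isMaximal R).ne_top

lemma ideal_le_total [IsNoetherianRing R] (hM : (maximalIdeal R).IsPrincipal) (I J : Ideal R) :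
    I ≤ J ∨ J ≤ I := by
  rcases eq_bot_or_exists_eq_maximalIdeal_pow hM I with rfl | ⟨k, rfl⟩
  · exact .inl bot_le
  rcases eq_bot_or_exists_eq_maximalIdeal_pow hM J with rfl | ⟨l, rfl⟩
  · exact .inr bot_le
  exact (le_total l k).imp (Ideal.pow_le_pow_right ·) (Ideal.pow_le_pow_right ·)

lemma eq_or_eq_of_sup_eq_maximalIdeal [IsNoetherianRing R] (hM : (maximalIdeal R).IsPrincipal)
    {I J : Ideal R} (h : I ⊔ J = maximalIdeal R) : I = maximalIdeal R ∨ J = maximalIdeal R := by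
  rcases ideal_le_total hM I J with hIJ | hJI
  · exact .inr (sup_eq_right.2 hIJ ▸ h)
  · exact .inl (sup_eq_left.2 hJI ▸ h)

lemma finite_ideal [IsArtinianRing R] (hM : (maximalIdeal R).IsPrincipal) : Finite (Ideal R) := by
  obtain ⟨N, hN : maximalIdeal R ^ N = ⊥⟩ := (isArtinianRing_iff_isNilpotent_maximalIdeal R).1 ‹_›
  refine Set.finite_univ_iff.1 <| ((Set.finite_Iic N).image (maximalIdeal R ^ ·)).subset ?_
  rintro I -
  rcases eq_bot_or_exists_eq_maximalIdeal_pow hM I with rfl | ⟨k, rfl⟩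
  · exact ⟨N, Set.mem_Iic.2 le_rfl, hN⟩
  rcases le_total k N with h | h
  · exact ⟨k, h, rfl⟩
  · have hk : maximalIdeal R ^ k = ⊥ := le_bot_iff.1 (hN ▸ Ideal.pow_le_pow_right h)
    exact ⟨N, Set.mem_Iic.2 le_rfl, hN.trans hk.symm⟩

lemma exists_ne_bot_lt_maximalIdeal
    (h : {I : Ideal R | I ≠ ⊥ ∧ I ≠ ⊤}.Nontrivial) : ∃ a : Ideal R, a ≠ ⊥ ∧ a < maximalIdeal R := by
  obtain ⟨I, ⟨hI, hI'⟩, J, ⟨hJ, hJ'⟩, hIJ⟩ := h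
  by_cases hIM : I = maximalIdeal R
  · exact ⟨J, hJ, lt_of_le_of_ne (le_maximalIdeal hJ') (hIM ▸ hIJ.symm)⟩
  · exact ⟨I, hI, lt_of_le_of_ne (le_maximalIdeal hI') hIM⟩

end IsLocalRing

lemma pis_eq_supCoatomGraph (R : Type*) [CommRing R] [IsArtinianRing R] :
    PIS R = supCoatomGraph (Ideal R) := by
  ext I J
  refine and_congr_right fun _ ↦ ?_
  rw [← Ideal.isMaximal_def]
  exact ⟨fun h ↦ IsArtinianRing.isMaximal_of_isPrime _, Ideal.IsMaximal.isPrime⟩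

open IsLocalRing

section ProductOfLocalRings

variable {ι : Type*} {R : ι → Type*} [∀ i, CommRing (R i)] [∀ i, IsLocalRing (R i)]

lemma isCoatom_pi_sup_iff {s t : ∀ i, Ideal (R i)} :
    IsCoatom (s ⊔ t) ↔
      ∃ i, s i ⊔ t i = maximalIdeal (R i) ∧ ∀ j, j ≠ i → s j = ⊤ ∨ t j = ⊤ := by
  simp only [Pi.isCoatom_iff, Pi.sup_apply, IsLocalRing.isCoatom_iff, IsLocalRing.sup_eq_top_iff]

lemma supCoatomGraph_pi_adj_iff {s t : {t : ∀ i, Ideal (R i) // t ≠ ⊥ ∧ t ≠ ⊤}} :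
    (supCoatomGraph _).Adj s t ↔ s ≠ t ∧
      ∃ i, s.1 i ⊔ t.1 i = maximalIdeal (R i) ∧ ∀ j, j ≠ i → s.1 j = ⊤ ∨ t.1 j = ⊤ :=
  and_congr_right fun _ ↦ isCoatom_pi_sup_iff

lemma supCoatomGraph_pi_exists_adj_adj (hM : ∀ i, maximalIdeal (R i) ≠ ⊥)
    (s t : {t : ∀ i, Ideal (R i) // t ≠ ⊥ ∧ t ≠ ⊤}) (hst : s ≠ t)
    (hadj : ¬(supCoatomGraph _).Adj s t) :
    ∃ z, (supCoatomGraph _).Adj s z ∧ (supCoatomGraph _).Adj z t := by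
  classical
  obtain ⟨i, k, hi, hk, hik⟩ :
      ∃ i k, s.1 i ≠ ⊤ ∧ t.1 k ≠ ⊤ ∧ (i ≠ k → s.1 k = ⊤ ∧ t.1 i = ⊤) := by
    by_cases h : ∃ j, s.1 j ≠ ⊤ ∧ t.1 j ≠ ⊤
    · obtain ⟨j, hsj, htj⟩ := h
      exact ⟨j, j, hsj, htj, fun h ↦ absurd rfl h⟩
    · push Not at h
      obtain ⟨i, hi⟩ := Function.ne_iff.1 s.2.2
      obtain ⟨k, hk⟩ := Function.ne_iff.1 t.2.2
      exact ⟨i, k, hi, hk, fun _ ↦ ⟨not_not.1 (mt (h k) hk), h i hi⟩⟩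
  let z : ∀ j, Ideal (R j) := fun j ↦ if j = i ∨ j = k then maximalIdeal (R j) else ⊤
  have hzk : z k = maximalIdeal (R k) := if_pos (.inr rfl)
  have hz : z ≠ ⊥ ∧ z ≠ ⊤ := ⟨fun h ↦ hM k (hzk ▸ congrFun h k),
    fun h ↦ (maximalIdeal.isMaximal _).ne_top (hzk ▸ congrFun h k)⟩
  have hsz : IsCoatom (s.1 ⊔ z) := by
    refine isCoatom_pi_sup_iff.2 ⟨i, ?_, fun j hj ↦ ?_⟩
    · rw [show z i = _ from if_pos (.inl rfl), sup_eq_right.2 (le_maximalIdeal hi)]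
    · by_cases hjk : j = k
      · exact .inl (hjk ▸ (hik (hjk ▸ hj.symm)).1)
      · exact .inr (if_neg (by tauto))
  have hzt : IsCoatom (z ⊔ t.1) := by
    refine isCoatom_pi_sup_iff.2 ⟨k, ?_, fun j hj ↦ ?_⟩
    · rw [hzk, sup_eq_left.2 (le_maximalIdeal hk)]
    · by_cases hji : j = i
      · exact .inr (hji ▸ (hik (hji ▸ hj)).2)
      · exact .inl (if_neg (by tauto))
  refine ⟨⟨z, hz⟩, ⟨fun h ↦ hadj ⟨hst, ?_⟩, hsz⟩, ⟨fun h ↦ hadj ⟨hst, ?_⟩, hzt⟩⟩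
  · rwa [h]
  · rwa [← h]

lemma exists_adj_xor_adj_of_not_iff [Nontrivial ι] (hM : ∀ i, maximalIdeal (R i) ≠ ⊥)
    {u v : {t : ∀ i, Ideal (R i) // t ≠ ⊥ ∧ t ≠ ⊤}} {k : ι}
    (hk : ¬(u.1 k = maximalIdeal (R k) ↔ v.1 k = maximalIdeal (R k))) :
    ∃ w : {t : ∀ i, Ideal (R i) // t ≠ ⊥ ∧ t ≠ ⊤}, w.1 k = ⊥ ∧
      Xor ((supCoatomGraph _).Adj w u) ((supCoatomGraph _).Adj w v) := by
  classical
  obtain ⟨j, hjk⟩ := exists_ne k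
  let w : {t : ∀ i, Ideal (R i) // t ≠ ⊥ ∧ t ≠ ⊤} :=
    ⟨Function.update ⊤ k ⊥, ne_of_apply_ne (· j) (by simp [hjk]), ne_of_apply_ne (· k) (by simp)⟩
  have hw (x : {t : ∀ i, Ideal (R i) // t ≠ ⊥ ∧ t ≠ ⊤}) :
      (supCoatomGraph _).Adj w x ↔ x.1 k = maximalIdeal (R k) := by
    change w ≠ x ∧ IsCoatom (Function.update ⊤ k ⊥ ⊔ x.1) ↔ _
    rw [Pi.update_top_bot_sup, Pi.isCoatom_update_top_iff, IsLocalRing.isCoatom_iff,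
      and_iff_right_iff_imp]
    rintro hx rfl
    exact hM k (by simpa [w] using hx.symm)
  exact ⟨w, by simp [w], by rwa [xor_iff_not_iff, hw, hw]⟩

lemma exists_isClique_ncard_eq [Fintype ι] (hM : ∀ i, maximalIdeal (R i) ≠ ⊥) {i₀ : ι}
    {a : Ideal (R i₀)} (ha : a ≠ ⊥) (haM : a < maximalIdeal (R i₀)) :
    ∃ C : Set {t : ∀ i, Ideal (R i) // t ≠ ⊥ ∧ t ≠ ⊤}, (supCoatomGraph _).IsClique C ∧
      C.ncard = Fintype.card ι + 1 ∧ (∀ x ∈ C, ∀ k, x.1 k ≠ ⊥) ∧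
      ∀ u ∈ C, ∀ v ∈ C, u ≠ v →
        ∃ k, ¬(u.1 k = maximalIdeal (R k) ↔ v.1 k = maximalIdeal (R k)) := by
  classical
  have hMtop (i : ι) : maximalIdeal (R i) ≠ ⊤ := (maximalIdeal.isMaximal _).ne_top
  let w : {t : ∀ i, Ideal (R i) // t ≠ ⊥ ∧ t ≠ ⊤} := ⟨Function.update ⊤ i₀ a,
    ne_of_apply_ne (· i₀) (by simpa), ne_of_apply_ne (· i₀) (by simpa using haM.ne_top)⟩
  let W (j : ι) : {t : ∀ i, Ideal (R i) // t ≠ ⊥ ∧ t ≠ ⊤} :=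
    ⟨fun l ↦ if l = i₀ ∨ l = j then maximalIdeal (R l) else ⊤,
      ne_of_apply_ne (· i₀) (by simp [hM]), ne_of_apply_ne (· i₀) (by simp [hMtop])⟩
  have hwM (l : ι) : w.1 l ≠ maximalIdeal (R l) := by
    rcases eq_or_ne l i₀ with rfl | hl
    · simpa [w] using haM.ne
    · simpa [w, hl] using (hMtop l).symm
  have hWM (j l : ι) : (W j).1 l = maximalIdeal (R l) ↔ l = i₀ ∨ l = j := by
    by_cases h : l = i₀ ∨ l = j <;> simp [W, h, (hMtop l).symm]
  have hWinj : Function.Injective W := fun j j' h ↦ by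
    have h1 := (hWM j' j).1 (h ▸ (hWM j j).2 (.inr rfl))
    have h2 := (hWM j j').1 (h.symm ▸ (hWM j' j').2 (.inr rfl))
    grind
  refine ⟨insert w (Set.range W), isClique_insert.2 ⟨?_, ?_⟩, ?_, ?_, ?_⟩
  · rintro _ ⟨j, rfl⟩ _ ⟨j', rfl⟩ hne
    refine ⟨hne, isCoatom_pi_sup_iff.2 ⟨i₀, by simp [W], fun l hl ↦ ?_⟩⟩
    by_cases hlj : l = j
    · exact .inr (if_neg (by grind))
    · exact .inl (if_neg (by grind))
  · rintro _ ⟨j, rfl⟩ hne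
    refine ⟨hne, isCoatom_pi_sup_iff.2 ⟨i₀, by simp [w, W, haM.le], fun l hl ↦ ?_⟩⟩
    exact .inl (by simp [w, hl])
  · have hw : w ∉ Set.range W := by
      rintro ⟨j, hj⟩
      exact hwM i₀ (hj ▸ (hWM j i₀).2 (.inl rfl))
    rw [Set.ncard_insert_of_notMem hw (Set.finite_range W), Set.ncard_range_of_injective hWinj,
      Nat.card_eq_fintype_card]
  · rintro _ (rfl | ⟨j, rfl⟩) l
    · rcases eq_or_ne l i₀ with rfl | hl
      · simpa [w] using ha
      · simp [w, hl]
    · by_cases h : l = i₀ ∨ l = j <;> simp [W, h, hM]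
  · rintro _ (rfl | ⟨j, rfl⟩) _ (rfl | ⟨j', rfl⟩) huv
    · exact absurd rfl huv
    · exact ⟨j', by simp [hwM, hWM]⟩
    · exact ⟨j, by simp [hwM, hWM]⟩
    · have hjj' : j ≠ j' := fun h ↦ huv (h ▸ rfl)
      by_cases hj : j = i₀
      · exact ⟨j', by simp [hWM]; grind⟩
      · exact ⟨j, by simp [hWM]; grind⟩

lemma ncard_le_of_isClique_of_forall_exists_eq_top [Fintype ι]
    {K : Set {t : ∀ i, Ideal (R i) // t ≠ ⊥ ∧ t ≠ ⊤}} (hK : (supCoatomGraph _).IsClique K)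
    (h : ∀ i, ∃ x ∈ K, x.1 i = ⊤) : K.ncard ≤ Fintype.card ι := by
  classical
  rcases K.finite_or_infinite with hfin | hinf
  swap; · simp [hinf.ncard]
  have := hfin.fintype
  let supp (x : K) : Finset ι := {i | x.1.1 i ≠ ⊤}
  have hmeet (x y : K) (hxy : x ≠ y) : ∃ i, supp x ∩ supp y = {i} := by
    obtain ⟨-, i, hsup, htop⟩ := supCoatomGraph_pi_adj_iff.1 (hK x.2 y.2 (Subtype.coe_ne_coe.2 hxy))
    have hi : x.1.1 i ≠ ⊤ ∧ y.1.1 i ≠ ⊤ := by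
      rw [← not_or, ← IsLocalRing.sup_eq_top_iff, hsup]
      exact (maximalIdeal.isMaximal _).ne_top
    refine ⟨i, Finset.ext fun j ↦ ?_⟩
    by_cases hj : j = i
    · simpa [supp, hj] using hi
    · simpa [supp, hj, or_iff_not_and_not] using htop j hj
  have hcard (x : K) : 1 < (supp x).card := by
    obtain ⟨i, hi⟩ := Function.ne_iff.1 x.1.2.2
    obtain ⟨y, hy, hyi⟩ := h i
    obtain ⟨j, hj⟩ := hmeet x ⟨y, hy⟩ (fun h ↦ hi (h ▸ hyi))
    have hj' := Finset.mem_inter.1 (hj ▸ Finset.mem_singleton_self j)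
    refine Finset.one_lt_card.2 ⟨i, by simpa [supp] using hi, j, hj'.1, fun hij ↦ ?_⟩
    simp [supp, ← hij, hyi] at hj'
  rw [← Nat.card_coe_set_eq, Nat.card_eq_fintype_card]
  refine Fintype.card_le_of_pairwise_card_inter_eq supp 1 hcard fun x y hxy ↦ ?_
  obtain ⟨i, hi⟩ := hmeet x y hxy
  rw [hi, Finset.card_singleton]

variable [∀ i, IsPrincipalIdealRing (R i)]

lemma ncard_le_of_isClique_of_forall_ne_top [Finite ι]
    {K : Set {t : ∀ i, Ideal (R i) // t ≠ ⊥ ∧ t ≠ ⊤}} (hK : (supCoatomGraph _).IsClique K)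
    (i : ι) (hi : ∀ x ∈ K, x.1 i ≠ ⊤) : K.ncard ≤ Nat.card ι + 1 := by
  classical
  have hpair : ∀ x ∈ K, ∀ y ∈ K, x ≠ y →
      x.1 i ⊔ y.1 i = maximalIdeal (R i) ∧ ∀ j, j ≠ i → x.1 j = ⊤ ∨ y.1 j = ⊤ := by
    intro x hx y hy hxy
    obtain ⟨-, i', hsup, htop⟩ := supCoatomGraph_pi_adj_iff.1 (hK hx hy hxy)
    obtain rfl : i = i' := by_contra fun h ↦ (htop i h).elim (hi x hx) (hi y hy)
    exact ⟨hsup, htop⟩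
  -- Encode `x` by `none` if `xᵢ ≠ 𝔪ᵢ` (at most one such `x`, since `𝔪ᵢ` is sup-irreducible),
  -- and otherwise by an index `j ≠ i` with `xⱼ ≠ ⊤` (such indices are private to `x`),
  -- or by `i` itself if there is none (then `x` is determined).
  have hidx (x : {t : ∀ i, Ideal (R i) // t ≠ ⊥ ∧ t ≠ ⊤}) :
      ∃ j, (j ≠ i → x.1 j ≠ ⊤) ∧ (j = i → ∀ l, l ≠ i → x.1 l = ⊤) := by
    by_cases h : ∃ l, l ≠ i ∧ x.1 l ≠ ⊤
    · obtain ⟨l, hl, hxl⟩ := h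
      exact ⟨l, fun _ ↦ hxl, fun h ↦ absurd h hl⟩
    · push Not at h
      exact ⟨i, fun h ↦ absurd rfl h, fun _ ↦ h⟩
  choose idx hidx using hidx
  let code (x : {t : ∀ i, Ideal (R i) // t ≠ ⊥ ∧ t ≠ ⊤}) : Option ι :=
    if x.1 i = maximalIdeal (R i) then some (idx x) else none
  have hcode : Set.InjOn code K := by
    intro x hx y hy hxy
    by_contra hne
    obtain ⟨hsup, htop⟩ := hpair x hx y hy hne
    by_cases hxM : x.1 i = maximalIdeal (R i) <;> by_cases hyM : y.1 i = maximalIdeal (R i) <;>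
      simp only [code, hxM, hyM, if_true, if_false, Option.some_inj, reduceCtorEq] at hxy
    · have hidy := hidx y
      rw [← hxy] at hidy
      by_cases hj : idx x = i
      · refine hne (Subtype.ext (funext fun l ↦ ?_))
        by_cases hl : l = i
        · subst hl; rw [hxM, hyM]
        · rw [(hidx x).2 hj l hl, hidy.2 hj l hl]
      · exact (htop _ hj).elim ((hidx x).1 hj) (hidy.1 hj)
    · exact (eq_or_eq_of_sup_eq_maximalIdeal (IsPrincipalIdealRing.principal _) hsup).elim hxM hyM
  calc K.ncard ≤ (Set.univ : Set (Option ι)).ncard :=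
        Set.ncard_le_ncard_of_injOn code (fun _ _ ↦ trivial) hcode Set.finite_univ
    _ = Nat.card ι + 1 := by rw [Set.ncard_univ, Finite.card_option]

lemma ncard_le_of_isClique [Fintype ι] {K : Set {t : ∀ i, Ideal (R i) // t ≠ ⊥ ∧ t ≠ ⊤}}
    (hK : (supCoatomGraph _).IsClique K) : K.ncard ≤ Fintype.card ι + 1 := by
  by_cases h : ∃ i, ∀ x ∈ K, x.1 i ≠ ⊤
  · obtain ⟨i, hi⟩ := h
    simpa using ncard_le_of_isClique_of_forall_ne_top hK i hi
  · push Not at h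
    exact (ncard_le_of_isClique_of_forall_exists_eq_top hK h).trans (Nat.le_succ _)

end ProductOfLocalRings

theorem sdim_supCoatomGraph_pi {ι : Type*} [Fintype ι] [Nontrivial ι]
    {R : ι → Type*} [∀ i, CommRing (R i)] [∀ i, IsLocalRing (R i)]
    [∀ i, IsPrincipalIdealRing (R i)] [∀ i, IsArtinianRing (R i)]
    (htwo : ∀ i, ({I : Ideal (R i) | I ≠ ⊥ ∧ I ≠ ⊤}).Nontrivial) :
    sdim (supCoatomGraph (∀ i, Ideal (R i))) =
      (Nat.card {t : ∀ i, Ideal (R i) // t ≠ ⊥ ∧ t ≠ ⊤} - (Fintype.card ι + 1) : ℕ) := by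
  classical
  choose a ha haM using fun i ↦ IsLocalRing.exists_ne_bot_lt_maximalIdeal (htwo i)
  have hM (i : ι) : maximalIdeal (R i) ≠ ⊥ := (bot_le.trans_lt (haM i)).ne'
  have := fun i ↦ IsLocalRing.finite_ideal (R := R i) (IsPrincipalIdealRing.principal _)
  obtain ⟨i₀⟩ := (inferInstance : Nonempty ι)
  obtain ⟨C, hC, hCcard, hCbot, hCsep⟩ := exists_isClique_ncard_eq hM (ha i₀) (haM i₀)
  refine sdim_eq_of_isClique (ediam_le_two_of_exists_adj_adj (supCoatomGraph_pi_exists_adj_adj hM))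
    (fun _ ↦ ncard_le_of_isClique) hC hCcard fun u hu v hv huv ↦ ?_
  obtain ⟨k, hk⟩ := hCsep u hu v hv huv
  obtain ⟨w, hwk, hw⟩ := exists_adj_xor_adj_of_not_iff hM hk
  exact ⟨w, fun hwC ↦ hCbot w hwC k hwk, hw⟩

/-- For `R ≅ R₁ × ⋯ × Rₙ` (`n ≥ 2`) with each `(Rᵢ, Mᵢ)` an Artinian local
principal ideal ring having at least two nonzero proper ideals,
`sdim (PIS R) = |V(PIS R)| - n - 1`. -/
theorem pis_sdim_of_localPIR {n : ℕ} (hn : 2 ≤ n)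
    (R : Fin n → Type*) [∀ i, CommRing (R i)] [∀ i, IsLocalRing (R i)]
    [∀ i, IsPrincipalIdealRing (R i)] [∀ i, IsArtinianRing (R i)]
    (htwo : ∀ i, ({I : Ideal (R i) | I ≠ ⊥ ∧ I ≠ ⊤}).Nontrivial) :
    sdim (PIS (∀ i, R i)) =
      (Nat.card {I : Ideal (∀ i, R i) // I ≠ ⊥ ∧ I ≠ ⊤} - n - 1 : ℕ) := by
  have : Nontrivial (Fin n) := Fin.nontrivial_iff_two_le.2 hn
  let e := (Ideal.piOrderIso (R := R)).supCoatomGraphIso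
  rw [pis_eq_supCoatomGraph, e.sdim_eq, sdim_supCoatomGraph_pi htwo, Nat.card_congr e.toEquiv,
    Fintype.card_fin, Nat.sub_sub]
end

section
/- Let R be a commutative ring with unity whose prime ideal sum graph PIS(R) is connected. Then the strong metric dimension of PIS(R) is finite if and only if R has only finitely many ideals. -/
open SimpleGraph

/-!
A finite strong resolving set `S` is in particular resolving, so a vertex is determined by its
vector of distances to `S`. When `PIS(R)` is connected, two distinct maximal ideals `M`, `N`
meet nontrivially (otherwise the vertex `M` would be isolated), so every vertex is within
distance `1` of a maximal ideal and any two maximal ideals are within distance `2` of each other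
through `M ⊓ N`. Hence the diameter is at most `4`, the distance vectors take finitely many
values, and there are finitely many ideals. Conversely, if there are finitely many ideals, the
whole vertex set is a finite strong resolving set.
-/

section Resolving

variable {V : Type*} {G : SimpleGraph V}

def IsResolvingSet (G : SimpleGraph V) (S : Set V) : Prop :=
  ∀ u v : V, u ≠ v → ∃ w ∈ S, G.dist w u ≠ G.dist w v

theorem StronglyResolves.dist_ne (hG : G.Connected) {w u v : V} (huv : u ≠ v)
    (h : StronglyResolves G w u v) : G.dist w u ≠ G.dist w v := by
  have huv' := hG.pos_dist_of_ne huv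
  have hvu' := hG.pos_dist_of_ne huv.symm
  rcases h with h | h <;> omega

theorem IsStrongResolvingSet.isResolvingSet (hG : G.Connected) {S : Set V}
    (hS : IsStrongResolvingSet G S) : IsResolvingSet G S := fun u v huv =>
  let ⟨w, hw, hres⟩ := hS u v huv
  ⟨w, hw, hres.dist_ne hG huv⟩

/-- In a graph of bounded diameter, the distances to a finite resolving set take finitely many
values and determine the vertex. -/
theorem IsResolvingSet.finite {S : Set V} (hS : IsResolvingSet G S) (hSfin : S.Finite) {D : ℕ}
    (hdiam : ∀ u v : V, G.dist u v ≤ D) : Finite V := by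
  have := hSfin.to_subtype
  refine Finite.of_injective (fun v (w : S) => (⟨G.dist w v, by grind⟩ : Fin (D + 1))) ?_
  intro u v huv
  by_contra hne
  obtain ⟨w, hw, hdist⟩ := hS u v hne
  exact hdist (congrArg Fin.val (congrFun huv ⟨w, hw⟩))

theorem isStrongResolvingSet_univ (G : SimpleGraph V) : IsStrongResolvingSet G Set.univ :=
  fun u _ _ => ⟨u, trivial, Or.inl (by rw [dist_self, zero_add])⟩

theorem sdim_ne_top_iff : sdim G ≠ ⊤ ↔ ∃ S, IsStrongResolvingSet G S ∧ S.Finite := by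
  simp only [sdim, ne_eq, iInf_eq_top, not_forall, Set.encard_eq_top_iff, Set.not_infinite,
    Subtype.exists, exists_prop]

end Resolving

namespace PIS

variable {R : Type*} [CommRing R]

theorem dist_le_one_of_le_of_isPrime {I P : {I : Ideal R // I ≠ ⊥ ∧ I ≠ ⊤}} (hIP : I.1 ≤ P.1)
    (hP : P.1.IsPrime) : (PIS R).dist I P ≤ 1 := by
  rcases eq_or_ne I P with rfl | hne
  · simp
  · have hadj : (PIS R).Adj I P := ⟨hne, by rwa [Ideal.add_eq_sup, sup_eq_right.2 hIP]⟩
    exact (dist_eq_one_iff_adj.2 hadj).le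

theorem exists_isMaximal_dist_le_one (I : {I : Ideal R // I ≠ ⊥ ∧ I ≠ ⊤}) :
    ∃ M : {I : Ideal R // I ≠ ⊥ ∧ I ≠ ⊤}, M.1.IsMaximal ∧ (PIS R).dist I M ≤ 1 := by
  obtain ⟨M, hM, hIM⟩ := Ideal.exists_le_maximal I.1 I.2.2
  have hM0 : M ≠ ⊥ := fun h => I.2.1 (le_bot_iff.1 (h ▸ hIM))
  exact ⟨⟨M, hM0, hM.ne_top⟩, hM, dist_le_one_of_le_of_isPrime hIM hM.isPrime⟩

/-- If `M ⊓ N = ⊥`, every neighbour `J` of `M` lies in `M` but not in `N`, so `J ⊔ N = ⊤`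
and the modular law gives `M = (J ⊔ N) ⊓ M = J ⊔ N ⊓ M = J`: the vertex `M` is isolated. -/
theorem inf_ne_bot_of_isMaximal (hconn : (PIS R).Connected)
    {M N : {I : Ideal R // I ≠ ⊥ ∧ I ≠ ⊤}} (hM : M.1.IsMaximal) (hN : N.1.IsMaximal)
    (hMN : M ≠ N) : M.1 ⊓ N.1 ≠ ⊥ := by
  intro hMN0
  have hisolated : ∀ J, ¬ (PIS R).Adj M J := by
    rintro J ⟨hMJ, hprime⟩
    rw [Ideal.add_eq_sup] at hprime
    have hJM : J.1 ≤ M.1 := le_sup_right.trans (hM.eq_of_le hprime.ne_top le_sup_left).ge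
    have hJN : ¬ J.1 ≤ N.1 := fun hJN => J.2.1 (le_bot_iff.1 (hMN0.le.trans' (le_inf hJM hJN)))
    have hJN_top : J.1 ⊔ N.1 = ⊤ := by
      by_contra h
      exact hJN (le_sup_left.trans (hN.eq_of_le h le_sup_right).ge)
    have hmod := sup_inf_assoc_of_le N.1 hJM
    rw [hJN_top, top_inf_eq, inf_comm, hMN0, sup_bot_eq] at hmod
    exact hMJ (Subtype.ext hmod)
  obtain ⟨p⟩ := hconn.preconnected M N
  cases p with
  | nil => exact hMN rfl
  | cons hadj _ => exact hisolated _ hadj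

theorem dist_le_two_of_isMaximal (hconn : (PIS R).Connected)
    {M N : {I : Ideal R // I ≠ ⊥ ∧ I ≠ ⊤}} (hM : M.1.IsMaximal) (hN : N.1.IsMaximal) :
    (PIS R).dist M N ≤ 2 := by
  rcases eq_or_ne M N with rfl | hMN
  · simp
  let K : {I : Ideal R // I ≠ ⊥ ∧ I ≠ ⊤} :=
    ⟨M.1 ⊓ N.1, inf_ne_bot_of_isMaximal hconn hM hN hMN, ne_top_of_le_ne_top M.2.2 inf_le_left⟩
  calc (PIS R).dist M N ≤ (PIS R).dist M K + (PIS R).dist K N := hconn.dist_triangle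
    _ ≤ 1 + 1 := by
      rw [dist_comm]
      gcongr
      · exact dist_le_one_of_le_of_isPrime inf_le_left hM.isPrime
      · exact dist_le_one_of_le_of_isPrime inf_le_right hN.isPrime

theorem dist_le_four (hconn : (PIS R).Connected) (I J : {I : Ideal R // I ≠ ⊥ ∧ I ≠ ⊤}) :
    (PIS R).dist I J ≤ 4 := by
  obtain ⟨M, hM, hIM⟩ := exists_isMaximal_dist_le_one I
  obtain ⟨N, hN, hJN⟩ := exists_isMaximal_dist_le_one J
  calc (PIS R).dist I J ≤ (PIS R).dist I M + (PIS R).dist M J := hconn.dist_triangle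
    _ ≤ (PIS R).dist I M + ((PIS R).dist M N + (PIS R).dist N J) := by
      gcongr; exact hconn.dist_triangle
    _ ≤ 1 + (2 + 1) := by
      rw [dist_comm (u := N)]
      gcongr
      exact dist_le_two_of_isMaximal hconn hM hN

end PIS

theorem finite_ideal_of_finite_pis_vertices {R : Type*} [CommRing R]
    (h : Finite {I : Ideal R // I ≠ ⊥ ∧ I ≠ ⊤}) : Finite (Ideal R) := by
  have hcompl : (Set.univ \ {⊥, ⊤} : Set (Ideal R)) = {I | I ≠ ⊥ ∧ I ≠ ⊤} := by
    ext I
    simp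
  refine Set.finite_univ_iff.1 (Set.Finite.of_sdiff ?_ (Set.toFinite {⊥, ⊤}))
  rw [hcompl]
  exact Set.finite_coe_iff.1 h

/-- For a commutative ring `R` with `PIS(R)` connected, the strong metric
dimension of `PIS(R)` is finite iff `R` has only finitely many ideals. -/
theorem pis_sdim_finite_iff (R : Type*) [CommRing R]
    (hconn : (PIS R).Connected) :
    sdim (PIS R) ≠ ⊤ ↔ Finite (Ideal R) := by
  constructor
  · intro h
    obtain ⟨S, hS, hSfin⟩ := sdim_ne_top_iff.1 h
    exact finite_ideal_of_finite_pis_vertices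
      ((hS.isResolvingSet hconn).finite hSfin (PIS.dist_le_four hconn))
  · intro _
    exact sdim_ne_top_iff.2 ⟨Set.univ, isStrongResolvingSet_univ _, Set.toFinite _⟩
end
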